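/- arXiv:1701.06029 — 2 statements merged into one kernel-verified Lean document; each statement's English description precedes it below -/
import Mathlib

section
/- Every finite 2-connected outerplanar graph has a unique Hamilton cycle. -/
open SimpleGraph

universe u w

/-- Outerplanar: the vertices can be placed (injectively) on a line — equivalently on
a circle, with all vertices on the outer face boundary — so that no two edges cross. -/
def IsOuterplanar {V : Type u} (G : SimpleGraph V) : Prop :=
  ∃ f : V → ℕ, Function.Injective f ∧
    ∀ a b c d : V, G.Adj a b → G.Adj c d →
      ¬(f a < f c ∧ f c < f b ∧ f b < f d)

/-- 2-connected: at least three vertices, and deleting any single vertex leaves a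
connected graph. -/
def TwoConnected {V : Type u} (G : SimpleGraph V) : Prop :=
  3 ≤ Nat.card V ∧ ∀ v : V, (G.induce {u | u ≠ v}).Connected

/-!
Order the vertices along the line of the outerplanar embedding. A noncrossing graph in which no
vertex separates two others contains every edge between consecutive vertices and the edge between
the first and the last vertex: if one of them were missing, an innermost edge spanning the gap (or
the longest edge at the first vertex) would expose a cut vertex. These edges form a Hamilton cycle.
Any Hamilton cycle, taken as a graph of its own, is again noncrossing without cut vertices, so it
contains all these edges, and therefore is that cycle.
-/

namespace SimpleGraph

variable {V : Type*} {G H : SimpleGraph V}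

def NoCutVertex (G : SimpleGraph V) : Prop :=
  ∀ ⦃v s t : V⦄, s ≠ v → t ≠ v → ∃ p : G.Walk s t, v ∉ p.support

theorem noCutVertex_of_connected_induce (h : ∀ v, (G.induce {u | u ≠ v}).Connected) :
    G.NoCutVertex := by
  intro v s t hs ht
  obtain ⟨p⟩ := (h v).preconnected ⟨s, hs⟩ ⟨t, ht⟩
  let q : G.Walk s t := p.map (Embedding.induce _).toHom
  have hq : q.support = p.support.map Subtype.val := Walk.support_map _ p
  refine ⟨q, ?_⟩
  rw [hq, List.mem_map]
  rintro ⟨x, -, hx⟩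
  exact x.2 hx

theorem NoCutVertex.exists_adj_of_mem_of_notMem (hG : G.NoCutVertex) {S : Set V} {v s t : V}
    (hs : s ∈ S) (ht : t ∉ S) (hsv : s ≠ v) (htv : t ≠ v) :
    ∃ x ∈ S, ∃ y ∉ S, y ≠ v ∧ G.Adj x y := by
  obtain ⟨p, hp⟩ := hG hsv htv
  obtain ⟨d, hd, hx, hy⟩ := p.exists_boundary_dart S hs ht
  exact ⟨d.fst, hx, d.snd, hy, fun h => hp (h ▸ p.dart_snd_mem_support_of_mem_darts hd), d.adj⟩

section LinearOrder

variable [LinearOrder V]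

def IsNoncrossing (G : SimpleGraph V) : Prop :=
  ∀ ⦃a b c d : V⦄, G.Adj a b → G.Adj c d → a < c → c < b → b < d → False

theorem IsNoncrossing.mono (hHG : H ≤ G) (hG : G.IsNoncrossing) : H.IsNoncrossing :=
  fun _ _ _ _ hab hcd => hG (hHG hab) (hHG hcd)

variable [Fintype V]

theorem IsNoncrossing.adj_of_covBy (hH : H.IsNoncrossing) (hcut : H.NoCutVertex)
    (h3 : 3 ≤ Fintype.card V) {u w : V} (huw : u ⋖ w) : H.Adj u w := by
  by_contra hne
  obtain ⟨z, hzu, hzw⟩ :=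
    ENat.exists_ne_ne_of_three_le (by simpa [ENat.card_eq_coe_fintype_card] using h3) u w
  obtain ⟨c₀, hc₀u, d₀, hd₀u, -, hcd₀⟩ := hcut.exists_adj_of_mem_of_notMem (S := Set.Iic u)
    le_rfl (not_le.2 huw.lt) hzu.symm hzw.symm
  -- Among the edges `c d` with `c ≤ u < w ≤ d`, take the innermost one.
  obtain ⟨c, ⟨hcu, d₁, hwd₁, hcd₁⟩, hcmax⟩ := Set.exists_max_image
    {c | c ≤ u ∧ ∃ d, w ≤ d ∧ H.Adj c d} id (Set.toFinite _)
    ⟨c₀, hc₀u, d₀, huw.ge_of_gt (not_le.1 hd₀u), hcd₀⟩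
  obtain ⟨d, ⟨hwd, hcd⟩, hdmin⟩ := Set.exists_min_image
    {d | w ≤ d ∧ H.Adj c d} id (Set.toFinite _) ⟨d₁, hwd₁, hcd₁⟩
  have hud : u < d := huw.lt.trans_le hwd
  rcases hcu.lt_or_eq with hcu | rfl
  · -- No edge leaves `(c, u]` except through `c`, so `c` would be a cut vertex.
    obtain ⟨y, ⟨hcy, hyu⟩, y', hy', hy'c, hyy'⟩ := hcut.exists_adj_of_mem_of_notMem
      (S := Set.Ioc c u) ⟨hcu, le_rfl⟩ (fun h => h.2.not_gt hud) hcu.ne' hcd.ne'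
    rcases hy'c.lt_or_gt with hy'c | hcy'
    · exact hH hyy'.symm hcd hy'c hcy (hyu.trans_lt hud)
    · have hwy' : w ≤ y' := huw.ge_of_gt (not_le.1 fun h => hy' ⟨hcy', h⟩)
      exact (hcmax y ⟨hyu, y', hwy', hyy'⟩).not_gt hcy
  · -- No edge leaves `[w, d)` except through `d`, so `d` would be a cut vertex.
    have hwd : w < d := hwd.lt_of_ne fun h => hne (h ▸ hcd)
    obtain ⟨y, ⟨hwy, hyd⟩, y', hy', hy'd, hyy'⟩ := hcut.exists_adj_of_mem_of_notMem
      (S := Set.Ico w d) ⟨le_rfl, hwd⟩ (fun h => h.1.not_gt huw.lt) hwd.ne hud.ne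
    rcases hy'd.lt_or_gt with hy'd | hdy'
    · have hy'c : y' ≤ c := huw.le_of_lt (not_le.1 fun h => hy' ⟨h, hy'd⟩)
      rcases hy'c.lt_or_eq with hy'c | rfl
      · exact hH hyy'.symm hcd hy'c (huw.lt.trans_le hwy) hyd
      · exact (hdmin y ⟨hwy, hyy'.symm⟩).not_gt hyd
    · exact hH hcd hyy' (huw.lt.trans_le hwy) hyd hdy'

theorem IsNoncrossing.adj_of_isBot_of_isTop (hH : H.IsNoncrossing) (hcut : H.NoCutVertex)
    (h3 : 3 ≤ Fintype.card V) {m M : V} (hm : IsBot m) (hM : IsTop M) : H.Adj m M := by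
  by_contra hne
  obtain ⟨z, hzm, hzM⟩ :=
    ENat.exists_ne_ne_of_three_le (by simpa [ENat.card_eq_coe_fintype_card] using h3) m M
  have hmM : m < M := ((hm z).lt_of_ne hzm.symm).trans_le (hM z)
  obtain ⟨x, hx, y, -, -, hxy⟩ := hcut.exists_adj_of_mem_of_notMem (S := {m})
    rfl hmM.ne' hzm.symm hzM.symm
  have hmy : H.Adj m y := hx ▸ hxy
  -- Let `b` be the largest neighbour of `m`; then `b` would be a cut vertex.
  obtain ⟨b, hmb, hbmax⟩ := Set.exists_max_image (H.neighborSet m) id (Set.toFinite _) ⟨y, hmy⟩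
  have hbM : b < M := (hM b).lt_of_ne fun h => hne (h ▸ hmb)
  have hmb' : m < b := (hm b).lt_of_ne hmb.ne
  obtain ⟨x, hxb, y, hby, hyb, hxy⟩ := hcut.exists_adj_of_mem_of_notMem (S := Set.Iio b)
    hmb' hbM.not_gt hmb'.ne hbM.ne'
  have hby : b < y := (not_lt.1 hby).lt_of_ne' hyb
  rcases (hm x).lt_or_eq with hmx | rfl
  · exact hH hmb hxy hmx hxb hby
  · exact (hbmax y hxy).not_gt hby

end LinearOrder

theorem cycleGraph_adj_iff_pathGraph_adj_or {n : ℕ} {i j : Fin (n + 2)} :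
    (cycleGraph (n + 2)).Adj i j ↔
      (pathGraph (n + 2)).Adj i j ∨ s(i, j) = s(0, Fin.last (n + 1)) := by
  have hval_sub : ∀ a b : Fin (n + 2),
      ((a - b : Fin (n + 2)) : ℕ) = if b ≤ a then (a : ℕ) - b else n + 2 + a - b := by
    intro a b
    split_ifs with h
    · exact Fin.coe_sub_iff_le.mpr h
    · exact Fin.coe_sub_iff_lt.mpr (not_le.mp h)
  rw [cycleGraph_adj, pathGraph_adj, Sym2.eq_iff]
  simp only [Fin.ext_iff, Fin.val_zero, Fin.val_one, Fin.val_last, hval_sub, Fin.le_iff_val_le_val]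
  have := i.isLt
  have := j.isLt
  split_ifs <;> omega

theorem IsNoncrossing.adj_of_cycleGraph_adj [LinearOrder V] [Fintype V] {k : ℕ}
    (hk : Fintype.card V = k + 3) (hH : H.IsNoncrossing) (hcut : H.NoCutVertex)
    {i j : Fin (k + 3)} (hij : (cycleGraph (k + 3)).Adj i j) :
    H.Adj (Fintype.orderIsoFinOfCardEq V hk i) (Fintype.orderIsoFinOfCardEq V hk j) := by
  set e := Fintype.orderIsoFinOfCardEq V hk
  have h3 : 3 ≤ Fintype.card V := hk ▸ Nat.le_add_left 3 k
  rcases cycleGraph_adj_iff_pathGraph_adj_or.1 hij with hij | hij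
  · rcases hasse_adj.1 hij with hij | hij
    · exact hH.adj_of_covBy hcut h3 ((apply_covBy_apply_iff e).2 hij)
    · exact (hH.adj_of_covBy hcut h3 ((apply_covBy_apply_iff e).2 hij)).symm
  · have hbot : IsBot (e 0) := fun x => by simpa using e.monotone (Fin.zero_le (e.symm x))
    have htop : IsTop (e (Fin.last _)) := fun x => by
      simpa using e.monotone (Fin.le_last (e.symm x))
    have hadj := hH.adj_of_isBot_of_isTop hcut h3 hbot htop
    rcases Sym2.eq_iff.1 hij with ⟨rfl, rfl⟩ | ⟨rfl, rfl⟩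
    · exact hadj
    · exact hadj.symm

namespace Walk

variable [DecidableEq V] {a b : V}

theorem IsHamiltonianCycle.exists_walk_notMem_support {q : G.Walk a a}
    (hq : q.IsHamiltonianCycle) {v s t : V} (hs : s ≠ v) (ht : t ≠ v) :
    ∃ p : G.Walk s t, v ∉ p.support ∧ p.edges ⊆ q.edges := by
  -- Read from `v`, the cycle minus its last edge is a Hamiltonian path ending at `v`.
  set r := q.rotate v (hq.mem_support v)
  have hr : r.IsHamiltonianCycle := hq.rotate _
  have hP : r.tail.IsPath := hr.isCycle.isPath_tail
  have hmem := hr.isHamiltonian_tail.mem_support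
  refine ⟨(r.tail.takeUntil s (hmem s)).reverse.append (r.tail.takeUntil t (hmem t)), ?_, ?_⟩
  · rw [support_append, support_reverse, List.mem_append, List.mem_reverse, not_or]
    exact ⟨endpoint_notMem_support_takeUntil hP _ hs.symm,
      fun h => endpoint_notMem_support_takeUntil hP _ ht.symm (List.mem_of_mem_tail h)⟩
  · have hrq : r.tail.edges ⊆ q.edges := fun e he =>
      (rotate_edges q v _).mem_iff.1 (List.mem_of_mem_tail (edges_tail (p := r) ▸ he))
    rw [edges_append, edges_reverse]
    exact List.append_subset.2
      ⟨fun e he => hrq (edges_takeUntil_subset_edges _ _ (List.mem_reverse.1 he)),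
        fun e he => hrq (edges_takeUntil_subset_edges _ _ he)⟩

theorem IsHamiltonianCycle.noCutVertex_spanningCoe {q : G.Walk a a}
    (hq : q.IsHamiltonianCycle) : q.toSubgraph.spanningCoe.NoCutVertex := by
  intro v s t hs ht
  obtain ⟨p, hv, hpq⟩ := hq.exists_walk_notMem_support hs ht
  refine ⟨p.transfer _ fun e he => ?_, by rwa [support_transfer]⟩
  rw [Subgraph.edgeSet_spanningCoe, mem_edges_toSubgraph]
  exact hpq he

theorem IsHamiltonianCycle.edges_perm_of_subset [Fintype V] {p : G.Walk a a} {q : G.Walk b b}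
    (hp : p.IsHamiltonianCycle) (hq : q.IsHamiltonianCycle) (h : p.edges ⊆ q.edges) :
    p.edges.Perm q.edges :=
  (List.subperm_of_subset hp.edges_nodup h).perm_of_length_le <| by
    rw [length_edges, length_edges, hp.length_eq, hq.length_eq]

end Walk

theorem cycleGraph.isHamiltonianCycle_cycle (n : ℕ) : (cycleGraph.cycle n).IsHamiltonianCycle :=
  Walk.isHamiltonianCycle_iff_isCycle_and_length_eq.2 ⟨cycleGraph.isCycle_cycle, by simp⟩

theorem IsNoncrossing.exists_isHamiltonianCycle_unique_edges [LinearOrder V] [Fintype V]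
    [DecidableEq V] (hG : G.IsNoncrossing) (hcut : G.NoCutVertex) (h3 : 3 ≤ Fintype.card V) :
    ∃ (a : V) (p : G.Walk a a), p.IsHamiltonianCycle ∧
      ∀ (b : V) (q : G.Walk b b), q.IsHamiltonianCycle → {e | e ∈ q.edges} = {e | e ∈ p.edges} := by
  obtain ⟨k, hk⟩ : ∃ k, Fintype.card V = k + 3 := ⟨_, (Nat.sub_add_cancel h3).symm⟩
  set e := Fintype.orderIsoFinOfCardEq V hk
  let φ : cycleGraph (k + 3) →g G := ⟨e, hG.adj_of_cycleGraph_adj hk hcut⟩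
  have hC := (cycleGraph.isHamiltonianCycle_cycle k).map (f := φ) e.bijective
  refine ⟨_, _, hC, fun b q hq => ?_⟩
  -- Every Hamiltonian cycle, seen as a graph, again satisfies the hypotheses.
  let ψ : cycleGraph (k + 3) →g q.toSubgraph.spanningCoe :=
    ⟨e, (hG.mono q.toSubgraph.spanningCoe_le).adj_of_cycleGraph_adj hk hq.noCutVertex_spanningCoe⟩
  have hsub : ((cycleGraph.cycle k).map φ).edges ⊆ q.edges := fun x hx => by
    have hx' : x ∈ ((cycleGraph.cycle k).map ψ).edges := by
      rw [Walk.edges_map] at hx ⊢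
      exact hx
    have := ((cycleGraph.cycle k).map ψ).edges_subset_edgeSet hx'
    rwa [Subgraph.edgeSet_spanningCoe, Walk.mem_edges_toSubgraph] at this
  ext x
  exact (hC.edges_perm_of_subset hq hsub).mem_iff.symm

end SimpleGraph

/-- Every finite 2-connected outerplanar graph has a Hamilton cycle,
and it is unique as an edge set. -/
theorem stmt_7 {V : Type u} [Fintype V] [DecidableEq V] (G : SimpleGraph V) (ho : IsOuterplanar G)
    (h2 : TwoConnected G) :
    ∃ (a : V) (p : G.Walk a a), p.IsHamiltonianCycle ∧
      ∀ (b : V) (q : G.Walk b b), q.IsHamiltonianCycle →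
        {e | e ∈ q.edges} = {e | e ∈ p.edges} := by
  obtain ⟨f, hf, hcross⟩ := ho
  obtain ⟨h3, hconn⟩ := h2
  let _ : LinearOrder V := LinearOrder.lift' f hf
  have hG : G.IsNoncrossing := fun a b c d hab hcd hac hcb hbd =>
    hcross a b c d hab hcd ⟨hac, hcb, hbd⟩
  exact hG.exists_isHamiltonianCycle_unique_edges (noCutVertex_of_connected_induce hconn)
    (Nat.card_eq_fintype_card (α := V) ▸ h3)
end

section
/- Let G be a finite 2-connected graph and let K be a connected subgraph of G with at least three vertices. Let G_K be the graph obtained from G by contracting each connected component of G - K to a single vertex (and deleting multiple edges). Then G_K is 2-connected. -/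
/-!
Send each vertex of `G` to its image in `G_K`: itself if it lies in `K`, its component of
`G - K` otherwise. Adjacent vertices go to equal or adjacent vertices. Deleting a vertex `x`
of `K` from `G_K` thus leaves a connected graph, the image of the connected graph `G - x`.
Deleting a component vertex `c` leaves `K`, which is connected, and the other component
vertices, each adjacent to `K` because `G` is connected.
-/

open SimpleGraph

universe u w

/-- The contraction minor `G_K`: keep the vertices of `S` and the edges among them, and
contract each connected component of `G - S` to a single new vertex, adjacent to exactly
those vertices of `S` having a neighbour in that component. -/
def GK {V : Type u} (G : SimpleGraph V) (S : Set V) :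
    SimpleGraph (↥S ⊕ (G.induce Sᶜ).ConnectedComponent) where
  Adj a b :=
    match a, b with
    | Sum.inl x, Sum.inl y => G.Adj x y
    | Sum.inl x, Sum.inr c => ∃ w : ↥(Sᶜ : Set V),
        (G.induce Sᶜ).connectedComponentMk w = c ∧ G.Adj x w
    | Sum.inr c, Sum.inl x => ∃ w : ↥(Sᶜ : Set V),
        (G.induce Sᶜ).connectedComponentMk w = c ∧ G.Adj x w
    | Sum.inr _, Sum.inr _ => False
  symm := ⟨by
    rintro (x | c) (y | d) h
    · exact h.symm
    · exact h
    · exact h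
    · exact h.elim⟩
  loopless := ⟨by
    rintro (x | c) h
    · exact G.irrefl h
    · exact h⟩

namespace SimpleGraph

variable {V W : Type*} {G : SimpleGraph V} {H : SimpleGraph W}

theorem Connected.of_surjective_of_eq_or_adj (hG : G.Connected) (f : V → W)
    (hf : Function.Surjective f) (hadj : ∀ ⦃a b⦄, G.Adj a b → f a = f b ∨ H.Adj (f a) (f b)) :
    H.Connected := by
  have := hG.nonempty.map f
  refine Connected.mk fun w₁ w₂ => ?_
  obtain ⟨v₁, rfl⟩ := hf w₁
  obtain ⟨v₂, rfl⟩ := hf w₂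
  rw [reachable_iff_reflTransGen]
  refine Relation.ReflTransGen.lift' f (fun a b h => ?_) _ _
    ((reachable_iff_reflTransGen _ _).1 (hG.preconnected v₁ v₂))
  rcases hadj h with h | h
  · exact (h ▸ .refl : Relation.ReflTransGen H.Adj (f a) (f b))
  · exact .single h

theorem Connected.of_hom_of_forall_eq_or_adj (f : G →g H) (hG : G.Connected)
    (hdom : ∀ w, ∃ v, f v = w ∨ H.Adj (f v) w) : H.Connected := by
  have := hG.nonempty.map f
  have hreach : ∀ w, ∃ v, H.Reachable (f v) w := fun w =>
    (hdom w).imp fun _ h => h.elim (fun e => e ▸ .rfl) Adj.reachable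
  refine Connected.mk fun w₁ w₂ => ?_
  obtain ⟨v₁, h₁⟩ := hreach w₁
  obtain ⟨v₂, h₂⟩ := hreach w₂
  exact h₁.symm.trans (((hG.preconnected v₁ v₂).map f).trans h₂)

end SimpleGraph

theorem TwoConnected.preconnected {V : Type u} {G : SimpleGraph V} (hG : TwoConnected G) :
    G.Preconnected := by
  intro u v
  obtain ⟨x, hxu, hxv⟩ : ∃ x, x ≠ u ∧ x ≠ v := by
    by_contra! h
    have hsub : (Set.univ : Set V) ⊆ {u, v} := fun x _ => by
      by_cases hx : x = u
      · exact .inl hx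
      · exact .inr (h x hx)
    have := (Set.ncard_le_ncard hsub).trans (Set.ncard_insert_le u {v})
    rw [Set.ncard_univ, Set.ncard_singleton] at this
    exact absurd hG.1 (by omega)
  obtain ⟨p⟩ := (hG.2 x).preconnected ⟨u, hxu.symm⟩ ⟨v, hxv.symm⟩
  exact ⟨p.map (Embedding.induce _).toHom⟩

namespace GK

variable {V : Type u} (G : SimpleGraph V) (S : Set V)

open Classical in
noncomputable def proj (v : V) : ↥S ⊕ (G.induce Sᶜ).ConnectedComponent :=
  if h : v ∈ S then .inl ⟨v, h⟩ else .inr (G.componentComplMk h)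

variable {G S}

theorem proj_of_mem {v : V} (h : v ∈ S) : proj G S v = .inl ⟨v, h⟩ := dif_pos h

theorem proj_of_notMem {v : V} (h : v ∉ S) : proj G S v = .inr (G.componentComplMk h) :=
  dif_neg h

theorem proj_ne_inl {x : S} {v : V} (hv : v ≠ x) : proj G S v ≠ .inl x := by
  unfold proj
  split_ifs <;> simp [Subtype.ext_iff, hv]

theorem proj_eq_or_adj {u v : V} (h : G.Adj u v) :
    proj G S u = proj G S v ∨ (GK G S).Adj (proj G S u) (proj G S v) := by
  by_cases hu : u ∈ S <;> by_cases hv : v ∈ S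
  · rw [proj_of_mem hu, proj_of_mem hv]
    exact .inr h
  · rw [proj_of_mem hu, proj_of_notMem hv]
    exact .inr ⟨⟨v, hv⟩, rfl, h⟩
  · rw [proj_of_notMem hu, proj_of_mem hv]
    exact .inr ⟨⟨u, hu⟩, rfl, h.symm⟩
  · rw [proj_of_notMem hu, proj_of_notMem hv]
    exact .inl (congrArg _ (ConnectedComponent.sound (Adj.reachable (G := G.induce Sᶜ) h)))

theorem induce_ne_inl_connected {x : S} (hG : (G.induce {v | v ≠ (x : V)}).Connected) :
    ((GK G S).induce {z | z ≠ .inl x}).Connected := by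
  refine hG.of_surjective_of_eq_or_adj (fun v => ⟨proj G S v, proj_ne_inl v.prop⟩) ?_
    fun a b h => (proj_eq_or_adj (S := S) (G := G) h).imp_left Subtype.ext
  rintro ⟨s | c, hz⟩
  · exact ⟨⟨s, fun h => hz (congrArg _ (Subtype.ext h))⟩, Subtype.ext (proj_of_mem s.prop)⟩
  · obtain ⟨⟨w, hw⟩, rfl⟩ := c.exists_rep
    exact ⟨⟨w, fun h => hw (h ▸ x.prop)⟩, Subtype.ext (proj_of_notMem hw)⟩

theorem induce_ne_inr_connected (hS : (G.induce S).Connected) (hG : G.Preconnected)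
    (c : (G.induce Sᶜ).ConnectedComponent) :
    ((GK G S).induce {z | z ≠ .inr c}).Connected := by
  let ι : G.induce S →g (GK G S).induce {z | z ≠ .inr c} :=
    { toFun := fun s => ⟨.inl s, Sum.inl_ne_inr⟩, map_rel' := fun h => h }
  refine hS.of_hom_of_forall_eq_or_adj ι ?_
  rintro ⟨s | d, hz⟩
  · exact ⟨s, .inl rfl⟩
  · obtain ⟨⟨v, s⟩, ⟨hv, hvd⟩, hs, hadj⟩ :=
      ComponentCompl.exists_adj_boundary_pair hG (Set.nonempty_coe_sort.1 hS.nonempty) d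
    exact ⟨⟨s, hs⟩, .inr ⟨⟨v, hv⟩, hvd, hadj.symm⟩⟩

end GK

/-- If `K` is a connected subgraph on at least three vertices of a
finite 2-connected graph `G`, then the contraction minor `G_K` is 2-connected. -/
theorem stmt_11 {V : Type u} [Fintype V] (G : SimpleGraph V) (h2 : TwoConnected G)
    (S : Set V) (hconn : (G.induce S).Connected) (h3 : 3 ≤ S.ncard) :
    TwoConnected (GK G S) := by
  refine ⟨?_, ?_⟩
  · calc 3 ≤ S.ncard := h3
      _ = Nat.card S := (Nat.card_coe_set_eq S).symm
      _ ≤ _ := Nat.card_le_card_of_injective _ Sum.inl_injective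
  · rintro (x | c)
    · exact GK.induce_ne_inl_connected (h2.2 x)
    · exact GK.induce_ne_inr_connected hconn h2.preconnected c
end
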